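/- The partial map classifier 𝓛_𝕊(A) = { (s, v) | s ∈ 𝕊, v : s → A }, ordered by (s, v) ≤ (s′, v′) iff s implies s′ and v′ restricted to s equals v, is order isomorphic to the free pointed ω-cpo A_⊥ over the set A (the ω-cpo completion of A + 1), via the unique ω-continuous map A_⊥ → 𝓛_𝕊(A) preserving the bottom element and compatible with the inclusions of A. -/

import Mathlib

/-- The initial σ-frame `𝕊`, as the least subset of the propositions `Ω = Prop`
containing `False` and `True` and closed under joins of increasing ω-chains
(equivalently, the image of the free ω-cpo completion of `𝔹 = {⊥ ≤ ⊤}` in `Ω`). -/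
inductive InS : Prop → Prop
  | bot : InS False
  | top : InS True
  | sup (c : ℕ → Prop) (mono : ∀ n, c n → c (n + 1)) (h : ∀ n, InS (c n)) :
      InS (∃ n, c n)

theorem InS.of_decidable (p : Prop) [Decidable p] : InS p := by
  by_cases h : p
  · rw [eq_true h]; exact InS.top
  · rw [eq_false h]; exact InS.bot

/-- A map between preorders is ω-(Scott-)continuous if it is monotone and preserves
least upper bounds of enumerable directed subsets. -/
def OmegaContinuous {C D : Type} [Preorder C] [Preorder D] (f : C → D) : Prop :=
  Monotone f ∧
    ∀ (U : Set C) (x : C), U.Countable → U.Nonempty → DirectedOn (· ≤ ·) U →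
      IsLUB U x → IsLUB (f '' U) (f x)

/-- A preorder is an ω-cpo if every enumerable directed subset has a least upper bound. -/
def IsOmegaCPO (C : Type) [Preorder C] : Prop :=
  ∀ U : Set C, U.Countable → U.Nonempty → DirectedOn (· ≤ ·) U → ∃ x, IsLUB U x

/-- A cover-preserving monotone map from an ω-cpo presentation `(P, Cov)` into an
ordered set: the image of each cover has a least upper bound above the image of the
covered element. -/
def CovMorphism {P C : Type} [Preorder P] [Preorder C]
    (Cov : P → Set P → Prop) (f : P → C) : Prop :=
  Monotone f ∧ ∀ p U, Cov p U → ∃ s, IsLUB (f '' U) s ∧ f p ≤ s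

/-- `(Pω, η)` is the free ω-cpo completion of the ω-cpo presentation `(P, Cov)`:
`Pω` is an ω-cpo, `η` is a cover-preserving monotone map, and every cover-preserving
monotone map from `P` into an ω-cpo extends uniquely to an ω-continuous map on `Pω`. -/
structure IsFreeOmegaCompletion {P : Type} [Preorder P] (Cov : P → Set P → Prop)
    (Pω : Type) [PartialOrder Pω] (η : P → Pω) : Prop where
  cpo : IsOmegaCPO Pω
  eta_morph : CovMorphism Cov η
  extend_unique : ∀ (C : Type) [PartialOrder C], IsOmegaCPO C →
    ∀ f : P → C, CovMorphism Cov f →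
      ∃! g : Pω → C, OmegaContinuous g ∧ ∀ p, g (η p) = f p

/-- The partial map classifier `𝓛_𝕊(A)`: pairs of an extent `s ∈ 𝕊` and a value
`v : s → A`. -/
structure PartialEl (A : Type) where
  ext : Prop
  inS : InS ext
  val : ext → A

/-- The order on partial elements: `(s, v) ≤ (s', v')` iff `s` implies `s'` and `v'`
restricted to `s` equals `v`. -/
instance (A : Type) : Preorder (PartialEl A) where
  le x y := ∃ h : x.ext → y.ext, ∀ hx : x.ext, y.val (h hx) = x.val hx
  le_refl x := ⟨id, fun _ => rfl⟩
  le_trans x y z := fun ⟨h₁, H₁⟩ ⟨h₂, H₂⟩ =>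
    ⟨fun hx => h₂ (h₁ hx), fun hx => (H₂ (h₁ hx)).trans (H₁ hx)⟩

/-- The inclusion of total elements `A → 𝓛_𝕊(A)`. -/
def PartialEl.incl {A : Type} (a : A) : PartialEl A := ⟨True, InS.top, fun _ => a⟩

/-- The bottom element of `𝓛_𝕊(A)`: the unique map `⊥ → A`. -/
def PartialEl.botP (A : Type) : PartialEl A := ⟨False, InS.bot, fun h => h.elim⟩

/-- `(AB, η, bot)` is the free pointed ω-cpo (free ω-cpo with bottom element) over
the set `A`, i.e. the ω-cpo completion of `A + 1`. -/
structure IsFreePointedOmegaCPO (A : Type) (AB : Type) [PartialOrder AB]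
    (η : A → AB) (bot : AB) : Prop where
  cpo : IsOmegaCPO AB
  bot_le : ∀ x, bot ≤ x
  extend_unique : ∀ (C : Type) [PartialOrder C], IsOmegaCPO C → ∀ c : C,
    (∀ x, c ≤ x) → ∀ f : A → C,
      ∃! g : AB → C, OmegaContinuous g ∧ g bot = c ∧ ∀ a, g (η a) = f a


/-!
Classically every partial element is either undefined or total, so `𝓛_𝕊(A)` is the flat
domain on `A`: `botP` below the pairwise incomparable `incl a`. A nonempty directed subset of
a flat domain has a greatest element, so `𝓛_𝕊(A)` is an ω-cpo and every monotone map
out of it is ω-continuous. The inverse of `f : A_⊥ → 𝓛_𝕊(A)` is then the map sending `botP`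
to `⊥` and `incl a` to `η a`: it is a right inverse of `f` on the nose, and a left inverse
because `A_⊥` admits only the identity as ω-continuous endomorphism fixing `⊥` and `η`.
-/

theorem OmegaContinuous.comp {C D E : Type} [Preorder C] [Preorder D] [Preorder E]
    {g : D → E} {f : C → D} (hg : OmegaContinuous g) (hf : OmegaContinuous f) :
    OmegaContinuous (g ∘ f) := by
  refine ⟨hg.1.comp hf.1, fun U x hU hne hdir hx => ?_⟩
  rw [Set.image_comp]
  exact hg.2 _ _ (hU.image f) (hne.image f) (hdir.mono_comp hf.1) (hf.2 U x hU hne hdir hx)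

theorem omegaContinuous_id {C : Type} [Preorder C] : OmegaContinuous (id : C → C) :=
  ⟨monotone_id, fun U x _ _ _ hx => by rwa [Set.image_id]⟩

theorem Monotone.omegaContinuous {C D : Type} [Preorder C] [Preorder D] {f : C → D}
    (hf : Monotone f)
    (hC : ∀ (U : Set C) (x : C), U.Nonempty → DirectedOn (· ≤ ·) U → IsLUB U x →
      ∃ z ∈ U, x ≤ z) :
    OmegaContinuous f := by
  refine ⟨hf, fun U x _ hne hdir hx => ⟨?_, fun b hb => ?_⟩⟩
  · rintro _ ⟨z, hz, rfl⟩
    exact hf (hx.1 hz)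
  · obtain ⟨z, hz, hxz⟩ := hC U x hne hdir hx
    exact (hf hxz).trans (hb ⟨z, hz, rfl⟩)

theorem IsFreePointedOmegaCPO.eq_id {A AB : Type} [PartialOrder AB] {η : A → AB} {bot : AB}
    (h : IsFreePointedOmegaCPO A AB η bot) {k : AB → AB} (hk : OmegaContinuous k)
    (hbot : k bot = bot) (hη : ∀ a, k (η a) = η a) : k = id :=
  (h.extend_unique AB h.cpo bot h.bot_le η).unique ⟨hk, hbot, hη⟩
    ⟨omegaContinuous_id, rfl, fun _ => rfl⟩

namespace PartialEl

variable {A : Type}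

theorem ext' {x y : PartialEl A} (hext : x.ext ↔ y.ext)
    (hval : ∀ hx hy, x.val hx = y.val hy) : x = y := by
  obtain ⟨s, hs, v⟩ := x
  obtain ⟨t, ht, w⟩ := y
  obtain rfl : s = t := propext hext
  obtain rfl : v = w := funext fun hx => hval hx hx
  rfl

theorem le_antisymm {x y : PartialEl A} (hxy : x ≤ y) (hyx : y ≤ x) : x = y := by
  obtain ⟨i, hi⟩ := hxy
  obtain ⟨j, -⟩ := hyx
  exact ext' ⟨i, j⟩ fun hx _ => (hi hx).symm

-- Not an instance: it would compete with the preorder instance on `PartialEl A`.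
abbrev partialOrder : PartialOrder (PartialEl A) where
  le_antisymm _ _ := le_antisymm

theorem le_of_not_ext {x : PartialEl A} (hx : ¬x.ext) (y : PartialEl A) : x ≤ y :=
  ⟨fun h => (hx h).elim, fun h => (hx h).elim⟩

theorem botP_le (x : PartialEl A) : botP A ≤ x :=
  le_of_not_ext id x

theorem eq_botP_or_eq_incl (x : PartialEl A) : x = botP A ∨ ∃ a, x = incl a := by
  by_cases hx : x.ext
  · exact .inr ⟨x.val hx, ext' (iff_of_true hx trivial) fun _ _ => rfl⟩
  · exact .inl (ext' (iff_of_false hx id) fun h => (hx h).elim)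

section Directed

variable {U : Set (PartialEl A)}

theorem isGreatest_of_ext (hdir : DirectedOn (· ≤ ·) U) {z : PartialEl A} (hz : z ∈ U)
    (hzext : z.ext) : IsGreatest U z := by
  refine ⟨hz, fun w hw => ?_⟩
  obtain ⟨v, -, ⟨i, hi⟩, ⟨j, hj⟩⟩ := hdir w hw z hz
  exact ⟨fun _ => hzext, fun hw => by rw [← hi hw, ← hj hzext]⟩

theorem isLUB_botP_of_not_ext (h : ∀ z ∈ U, ¬z.ext) : IsLUB U (botP A) :=
  ⟨fun z hz => le_of_not_ext (h z hz) _, fun x _ => botP_le x⟩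

theorem exists_isLUB (hdir : DirectedOn (· ≤ ·) U) : ∃ x, IsLUB U x := by
  by_cases h : ∃ z ∈ U, z.ext
  · obtain ⟨z, hz, hzext⟩ := h
    exact ⟨z, (isGreatest_of_ext hdir hz hzext).isLUB⟩
  · exact ⟨botP A, isLUB_botP_of_not_ext fun z hz hzext => h ⟨z, hz, hzext⟩⟩

theorem isOmegaCPO : IsOmegaCPO (PartialEl A) :=
  fun _ _ _ hdir => exists_isLUB hdir

theorem exists_mem_ge_of_isLUB {x : PartialEl A} (hne : U.Nonempty)
    (hdir : DirectedOn (· ≤ ·) U) (hx : IsLUB U x) : ∃ z ∈ U, x ≤ z := by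
  by_cases h : ∃ z ∈ U, z.ext
  · obtain ⟨z, hz, hzext⟩ := h
    exact ⟨z, hz, hx.2 (isGreatest_of_ext hdir hz hzext).2⟩
  · obtain ⟨i, -⟩ := hx.2 (isLUB_botP_of_not_ext fun z hz hzext => h ⟨z, hz, hzext⟩).1
    obtain ⟨z, hz⟩ := hne
    exact ⟨z, hz, le_of_not_ext i z⟩

end Directed

section Elim

variable {C : Type} (c : C) (g : A → C)

open Classical in
noncomputable def elim (x : PartialEl A) : C :=
  if hx : x.ext then g (x.val hx) else c

theorem elim_of_ext {x : PartialEl A} (hx : x.ext) : x.elim c g = g (x.val hx) :=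
  dif_pos hx

theorem elim_of_not_ext {x : PartialEl A} (hx : ¬x.ext) : x.elim c g = c :=
  dif_neg hx

@[simp]
theorem elim_botP : (botP A).elim c g = c :=
  elim_of_not_ext c g id

@[simp]
theorem elim_incl (a : A) : (incl a).elim c g = g a :=
  elim_of_ext c g trivial

variable [Preorder C] {c}

theorem monotone_elim (hc : ∀ y, c ≤ y) : Monotone (elim c g) := by
  rintro x y ⟨i, hi⟩
  by_cases hx : x.ext
  · rw [elim_of_ext c g hx, elim_of_ext c g (i hx)]
    exact (congrArg g (hi hx)).ge
  · rw [elim_of_not_ext c g hx]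
    exact hc _

theorem omegaContinuous_elim (hc : ∀ y, c ≤ y) : OmegaContinuous (elim c g) :=
  (monotone_elim g hc).omegaContinuous fun _ _ hne hdir hx => exists_mem_ge_of_isLUB hne hdir hx

end Elim

end PartialEl

/-- the partial map classifier `𝓛_𝕊(A)` is order isomorphic to the free
pointed ω-cpo `A_⊥` over `A`, via the unique ω-continuous map `A_⊥ → 𝓛_𝕊(A)`
preserving the bottom element and compatible with the inclusions of `A`. -/
theorem partial_map_classifier_iso
    {A AB : Type} [PartialOrder AB] (η : A → AB) (bot : AB)
    (h : IsFreePointedOmegaCPO A AB η bot) :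
    (∃! f : AB → PartialEl A,
        OmegaContinuous f ∧ f bot = PartialEl.botP A ∧ ∀ a, f (η a) = PartialEl.incl a) ∧
      ∀ f : AB → PartialEl A,
        (OmegaContinuous f ∧ f bot = PartialEl.botP A ∧ ∀ a, f (η a) = PartialEl.incl a) →
          Function.Bijective f ∧ ∀ x y, x ≤ y ↔ f x ≤ f y := by
  let := PartialEl.partialOrder (A := A)
  refine ⟨h.extend_unique _ PartialEl.isOmegaCPO _ PartialEl.botP_le PartialEl.incl, ?_⟩
  rintro f ⟨hf, hf_bot, hf_η⟩
  have hfg : ∀ x, f (x.elim bot η) = x := by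
    intro x
    rcases x.eq_botP_or_eq_incl with rfl | ⟨a, rfl⟩
    · rw [PartialEl.elim_botP, hf_bot]
    · rw [PartialEl.elim_incl, hf_η]
  have hgf : ∀ y, (f y).elim bot η = y := congrFun <|
    h.eq_id ((PartialEl.omegaContinuous_elim η h.bot_le).comp hf)
      (by simp [hf_bot]) (by simp [hf_η])
  refine ⟨⟨Function.LeftInverse.injective hgf, Function.RightInverse.surjective hfg⟩,
    fun x y => ⟨fun hxy => hf.1 hxy, fun hxy => ?_⟩⟩
  simpa only [hgf] using PartialEl.monotone_elim η h.bot_le hxy
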